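/- If Z ∈ ℝ^{d×m} and v ∈ ℝ^d lies in the column space of Z, and φ̂ is an orthogonality-equivariant function whose output columns always lie in the column space of its input, then writing Z = U S Vᵀ (compact SVD with S > 0 of size r = rank(Z)), φ̂(Z) can be written as Z W for some W ∈ ℝ^{m×m'} depending only on ZᵀZ. -/

import Mathlib

/-!
Every column of `φ Z` lies in the column space of `Z`, so `φ Z = Z * W Z` for some `W`.
If `Z₁ᵀ Z₁ = Z₂ᵀ Z₂`, the maps `x ↦ Z₁ x` and `x ↦ Z₂ x` have the same norms, so `Z₁ x ↦ Z₂ x`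
is a well-defined isometry on the range of `Z₁`; extending it to all of `ℝᵈ` gives an orthogonal
`O` with `O Z₁ = Z₂`. Equivariance then yields `φ Z₂ = O φ Z₁ = Z₂ W Z₁`, so `W` may be taken
from one fixed representative of each Gram matrix.
-/

open Matrix

theorem LinearMap.exists_linearIsometry_comp_eq_of_norm_eq {𝕜 V E : Type*} [RCLike 𝕜]
    [AddCommGroup V] [Module 𝕜 V] [NormedAddCommGroup E] [InnerProductSpace 𝕜 E]
    [FiniteDimensional 𝕜 E]
    {f g : V →ₗ[𝕜] E} (h : ∀ x, ‖f x‖ = ‖g x‖) :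
    ∃ O : E →ₗᵢ[𝕜] E, O.toLinearMap ∘ₗ f = g := by
  have hg : ∀ x y, f x = f y → g x = g y := fun x y hxy => by
    rw [← sub_eq_zero, ← map_sub, ← norm_eq_zero, ← h, map_sub, hxy, sub_self, norm_zero]
  obtain ⟨s, hs⟩ := f.rangeRestrict.exists_rightInverse_of_surjective f.range_rangeRestrict
  have hfs : ∀ y, f (s y) = y := fun y => congrArg Subtype.val (LinearMap.congr_fun hs y)
  let L : LinearMap.range f →ₗᵢ[𝕜] E :=
    ⟨g ∘ₗ s, fun y => by rw [LinearMap.comp_apply, ← h, hfs, Submodule.coe_norm]⟩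
  refine ⟨L.extend, LinearMap.ext fun x => ?_⟩
  change L.extend (f.rangeRestrict x : E) = g x
  rw [LinearIsometry.extend_apply]
  exact hg _ _ (hfs _)

namespace Matrix

variable {𝕜 m n : Type*} [RCLike 𝕜] [Fintype m] [Fintype n] [DecidableEq m] [DecidableEq n]

theorem norm_toEuclideanLin_sq (A : Matrix m n 𝕜) (x : EuclideanSpace 𝕜 n) :
    ‖toEuclideanLin A x‖ ^ 2 = RCLike.re (inner 𝕜 (toEuclideanLin (Aᴴ * A) x) x) := by
  rw [norm_sq_eq_re_inner (𝕜 := 𝕜), toLpLin_mul_same, LinearMap.comp_apply,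
    toEuclideanLin_conjTranspose_eq_adjoint, LinearMap.adjoint_inner_left]

theorem toEuclideanLin_symm_mem_unitaryGroup
    (O : EuclideanSpace 𝕜 n →ₗᵢ[𝕜] EuclideanSpace 𝕜 n) :
    toEuclideanLin.symm O.toLinearMap ∈ unitaryGroup n 𝕜 := by
  rw [mem_unitaryGroup_iff', star_eq_conjTranspose, ← toEuclideanLin.injective.eq_iff,
    toLpLin_mul_same, toEuclideanLin_conjTranspose_eq_adjoint, LinearEquiv.apply_symm_apply,
    LinearIsometry.adjoint_comp_self', toLpLin_one]

theorem exists_mem_unitaryGroup_mul_eq_of_conjTranspose_mul_self_eq {A B : Matrix m n 𝕜}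
    (h : Aᴴ * A = Bᴴ * B) : ∃ U ∈ unitaryGroup m 𝕜, U * A = B := by
  have hnorm : ∀ x, ‖toEuclideanLin A x‖ = ‖toEuclideanLin B x‖ := fun x => by
    rw [← sq_eq_sq₀ (norm_nonneg _) (norm_nonneg _), norm_toEuclideanLin_sq,
      norm_toEuclideanLin_sq, h]
  obtain ⟨O, hO⟩ := LinearMap.exists_linearIsometry_comp_eq_of_norm_eq hnorm
  refine ⟨toEuclideanLin.symm O.toLinearMap, toEuclideanLin_symm_mem_unitaryGroup O, ?_⟩
  rw [← toEuclideanLin.injective.eq_iff, toLpLin_mul_same, LinearEquiv.apply_symm_apply, hO]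

theorem exists_orthogonal_mul_eq_of_transpose_mul_self_eq {A B : Matrix m n ℝ}
    (h : Aᵀ * A = Bᵀ * B) :
    ∃ O : Matrix m m ℝ, Oᵀ * O = 1 ∧ O * A = B := by
  simp only [← conjTranspose_eq_transpose_of_trivial] at h ⊢
  obtain ⟨O, hO, hOA⟩ := exists_mem_unitaryGroup_mul_eq_of_conjTranspose_mul_self_eq h
  exact ⟨O, mem_unitaryGroup_iff'.mp hO, hOA⟩

end Matrix

theorem Matrix.exists_eq_mul_of_forall_col_eq_mulVec {R m n k : Type*} [CommSemiring R]
    [Fintype n] {A : Matrix m k R} {Z : Matrix m n R}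
    (h : ∀ j, ∃ c : n → R, (fun i => A i j) = Z *ᵥ c) :
    ∃ W : Matrix n k R, A = Z * W := by
  choose c hc using h
  exact ⟨of fun i j => c j i, ext fun i j => by
    simpa [mul_apply, mulVec, dotProduct] using congrFun (hc j) i⟩

theorem equivariant_column_space_factorization {d m m' : ℕ}
    (φ : Matrix (Fin d) (Fin m) ℝ → Matrix (Fin d) (Fin m') ℝ)
    (hequiv : ∀ (O : Matrix (Fin d) (Fin d) ℝ) (Z : Matrix (Fin d) (Fin m) ℝ),
      Oᵀ * O = 1 → φ (O * Z) = O * φ Z)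
    (hcol : ∀ (Z : Matrix (Fin d) (Fin m) ℝ) (j : Fin m'),
      ∃ c : Fin m → ℝ, (fun i => φ Z i j) = Z.mulVec c) :
    ∃ η : Matrix (Fin m) (Fin m) ℝ → Matrix (Fin m) (Fin m') ℝ,
      ∀ Z : Matrix (Fin d) (Fin m) ℝ, φ Z = Z * η (Zᵀ * Z) := by
  choose W hW using fun Z => exists_eq_mul_of_forall_col_eq_mulVec (hcol Z)
  refine ⟨fun G => W (Function.invFun (fun Z => Zᵀ * Z) G), fun Z => ?_⟩
  set Z₀ := Function.invFun (fun Z : Matrix (Fin d) (Fin m) ℝ => Zᵀ * Z) (Zᵀ * Z)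
  have hZ₀ : Z₀ᵀ * Z₀ = Zᵀ * Z := Function.invFun_eq (f := fun Z => Zᵀ * Z) ⟨Z, rfl⟩
  obtain ⟨O, hO, hOZ⟩ := exists_orthogonal_mul_eq_of_transpose_mul_self_eq hZ₀
  calc φ Z = φ (O * Z₀) := by rw [hOZ]
    _ = O * φ Z₀ := hequiv _ _ hO
    _ = Z * W Z₀ := by rw [hW, ← Matrix.mul_assoc, hOZ]
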